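/- The class of metric families with straight finite decomposition complexity is stable under weak decomposition: if 𝒳 is a metric family over a metric space X and there exists k ∈ ℕ such that for every r > 0 there is a metric family 𝒴_r over X having straight finite decomposition complexity with 𝒳 (k,r)-decomposable over 𝒴_r, then 𝒳 has straight finite decomposition complexity. -/
import Mathlib


universe u

open Set

/-- Two subsets of a metric space are `r`-disjoint if all pairs of points, one from each,
are at distance greater than `r`. -/
def RDisjoint {X : Type u} [MetricSpace X] (r : ℝ) (A B : Set X) : Prop :=
  ∀ a ∈ A, ∀ b ∈ B, r < dist a b

/-- A metric family (a set of subsets of `X`) is uniformly bounded if the diameters of its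
members are bounded by a common constant. -/
def UniformlyBounded {X : Type u} [MetricSpace X] (𝒵 : Set (Set X)) : Prop :=
  ∃ C : ℝ, ∀ Z ∈ 𝒵, ∀ x ∈ Z, ∀ y ∈ Z, dist x y ≤ C

/-- A `(k, r)`-decomposition of a subset `Z` of `X` over a metric family `𝒴`:
`Z = Z₀ ∪ ⋯ ∪ Z_{k-1}` where each `Zᵢ` is a union of a collection of pairwise
`r`-disjoint members of `𝒴`. -/
def IsDecompOver {X : Type u} [MetricSpace X] (k : ℕ) (r : ℝ) (Z : Set X)
    (𝒴 : Set (Set X)) : Prop :=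
  ∃ Zs : Fin k → Set X, Z = ⋃ i, Zs i ∧
    ∀ i, ∃ 𝒞 : Set (Set X), 𝒞 ⊆ 𝒴 ∧ Zs i = ⋃₀ 𝒞 ∧
      ∀ A ∈ 𝒞, ∀ B ∈ 𝒞, A ≠ B → RDisjoint r A B

/-- A metric family `𝒳` is `(k, r)`-decomposable over `𝒴` if every member of `𝒳` admits a
`(k, r)`-decomposition over `𝒴`. -/
def Decomposable {X : Type u} [MetricSpace X] (k : ℕ) (r : ℝ)
    (𝒳 𝒴 : Set (Set X)) : Prop :=
  ∀ Z ∈ 𝒳, IsDecompOver k r Z 𝒴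

/-- A metric family `𝒳` over `X` has straight finite decomposition complexity if for every
strictly increasing sequence `R₁ < R₂ < ⋯` of positive reals there are `n` and families
`𝒳 = 𝒳₀, 𝒳₁, …, 𝒳ₙ` with `𝒳ᵢ` `R_{i+1}`-decomposable over `𝒳_{i+1}` for `i < n` and `𝒳ₙ`
uniformly bounded. -/
def SFDC {X : Type u} [MetricSpace X] (𝒳 : Set (Set X)) : Prop :=
  ∀ R : ℕ → ℝ, (∀ i, 0 < R i) → StrictMono R →
    ∃ n : ℕ, ∃ Xs : ℕ → Set (Set X), Xs 0 = 𝒳 ∧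
      (∀ i < n, Decomposable 2 (R i) (Xs i) (Xs (i + 1))) ∧
      UniformlyBounded (Xs n)

-- auxiliary lemmas

lemma rdisjoint_mono' {X : Type u} [MetricSpace X] {r r' : ℝ} {A B : Set X} (h : r' ≤ r)
    (hd : RDisjoint r A B) : RDisjoint r' A B :=
  fun a ha b hb => lt_of_le_of_lt h (hd a ha b hb)

lemma decomposable_self' {X : Type u} [MetricSpace X] (r : ℝ) {𝒜 ℬ : Set (Set X)}
    (h : 𝒜 ⊆ ℬ) : Decomposable 2 r 𝒜 ℬ := by
  intro Z hZ
  refine ⟨fun _ => Z, (Set.iUnion_const Z).symm, fun i => ⟨{Z}, by simpa using h hZ, by simp, ?_⟩⟩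
  intro A hA B hB hne
  rw [Set.mem_singleton_iff] at hA hB
  exact absurd (hA.trans hB.symm) hne

lemma decomposable_mono' {X : Type u} [MetricSpace X] {k : ℕ} {r r' : ℝ}
    {𝒜 ℬ ℬ' : Set (Set X)} (hr : r' ≤ r) (hB : ℬ ⊆ ℬ')
    (h : Decomposable k r 𝒜 ℬ) : Decomposable k r' 𝒜 ℬ' := by
  intro Z hZ
  obtain ⟨Zs, hZ1, hZ2⟩ := h Z hZ
  refine ⟨Zs, hZ1, fun i => ?_⟩
  obtain ⟨𝒞, h1, h2, h3⟩ := hZ2 i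
  exact ⟨𝒞, h1.trans hB, h2, fun A hA B hB' hne => rdisjoint_mono' hr (h3 A hA B hB' hne)⟩

def tailSet {X : Type u} (k : ℕ) (Zs : Fin k → Set X) (t : ℕ) : Set X :=
  ⋃ (i : Fin k) (_ : t ≤ (i : ℕ)), Zs i

lemma tailSet_zero {X : Type u} (k : ℕ) (Zs : Fin k → Set X) :
    tailSet k Zs 0 = ⋃ i, Zs i := by
  simp [tailSet]

lemma tailSet_succ {X : Type u} (k : ℕ) (Zs : Fin k → Set X) (t : ℕ) :
    tailSet k Zs t = (⋃ (i : Fin k) (_ : (i : ℕ) = t), Zs i) ∪ tailSet k Zs (t + 1) := by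
  ext x
  simp only [tailSet, Set.mem_iUnion, Set.mem_union]
  constructor
  · rintro ⟨i, hi, hx⟩
    rcases eq_or_lt_of_le hi with h | h
    · exact Or.inl ⟨i, h.symm, hx⟩
    · exact Or.inr ⟨i, h, hx⟩
  · rintro (⟨i, hi, hx⟩ | ⟨i, hi, hx⟩)
    · exact ⟨i, hi.ge, hx⟩
    · exact ⟨i, by omega, hx⟩

lemma tailSet_of_le {X : Type u} (k : ℕ) (Zs : Fin k → Set X) (t : ℕ) (h : k ≤ t) :
    tailSet k Zs t = ∅ := by
  ext x
  simp only [tailSet, Set.mem_iUnion, Set.mem_empty_iff_false, iff_false, not_exists]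
  intro i hi
  have := i.isLt
  omega

lemma iUnion_eq_single' {X : Type u} (k : ℕ) (Zs : Fin k → Set X) (t : ℕ) (h : t < k) :
    (⋃ (i : Fin k) (_ : (i : ℕ) = t), Zs i) = Zs ⟨t, h⟩ := by
  ext x
  simp only [Set.mem_iUnion]
  constructor
  · rintro ⟨i, hi, hx⟩
    have : i = ⟨t, h⟩ := Fin.ext hi
    rwa [this] at hx
  · intro hx
    exact ⟨⟨t, h⟩, rfl, hx⟩

lemma iUnion_eq_empty'' {X : Type u} (k : ℕ) (Zs : Fin k → Set X) (t : ℕ) (h : k ≤ t) :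
    (⋃ (i : Fin k) (_ : (i : ℕ) = t), Zs i) = ∅ := by
  ext x
  simp only [Set.mem_iUnion, Set.mem_empty_iff_false, iff_false, not_exists]
  intro i hi
  have := i.isLt
  omega

lemma iUnion_fin_two' {X : Type u} (A B : Set X) : (⋃ i : Fin 2, ![A, B] i) = A ∪ B := by
  ext x
  simp [Fin.exists_fin_two]
/-- The class of metric families with straight finite decomposition
complexity is stable under weak decomposition: if there is `k ∈ ℕ` such that for every
`r > 0` the family `𝒳` is `(k, r)`-decomposable over some family with sFDC, then `𝒳` has
sFDC. -/
theorem sfdc_stable_under_weak_decomposition {X : Type u} [MetricSpace X]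
    (𝒳 : Set (Set X))
    (h : ∃ k : ℕ, ∀ r : ℝ, 0 < r →
      ∃ 𝒴 : Set (Set X), SFDC 𝒴 ∧ Decomposable k r 𝒳 𝒴) :
    SFDC 𝒳 := by
  classical
  obtain ⟨k, hk⟩ := h
  intro R hRpos hRmono
  obtain ⟨𝒴, hY, hdec⟩ := hk (R k) (hRpos k)
  unfold Decomposable IsDecompOver at hdec
  choose! Zs hZeq h𝒞 using hdec
  choose! 𝒞f hsub hun hdis using h𝒞
  obtain ⟨m, Ys, hYs0, hYchain, hYbd⟩ :=
    hY (fun i => R (i + k)) (fun i => hRpos _) (fun a b hab => hRmono (by omega))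
  set Xs : ℕ → Set (Set X) := fun t =>
    if t = 0 then 𝒳
    else {W | ∃ Z ∈ 𝒳, W = tailSet k (Zs Z) t} ∪
      ⋃ j : Fin k, Ys (min (t - ((j : ℕ) + 1)) m) with hXs
  have hXs0 : Xs 0 = 𝒳 := by simp [hXs]
  have hXspos : ∀ t : ℕ, 0 < t → Xs t =
      {W | ∃ Z ∈ 𝒳, W = tailSet k (Zs Z) t} ∪
      ⋃ j : Fin k, Ys (min (t - ((j : ℕ) + 1)) m) := by
    intro t ht
    simp only [hXs]
    rw [if_neg (by omega)]
  have hcomp : ∀ t : ℕ, 0 < t → ∀ j : Fin k, Ys (min (t - ((j : ℕ) + 1)) m) ⊆ Xs t := by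
    intro t ht j W hW
    rw [hXspos t ht]
    exact Or.inr (Set.mem_iUnion.2 ⟨j, hW⟩)
  have htails : ∀ t : ℕ, 0 < t → ∀ Z ∈ 𝒳, tailSet k (Zs Z) t ∈ Xs t := by
    intro t ht Z hZ
    rw [hXspos t ht]
    exact Or.inl ⟨Z, hZ, rfl⟩
  have keyTail : ∀ Z ∈ 𝒳, ∀ t : ℕ,
      IsDecompOver 2 (R t) (tailSet k (Zs Z) t) (Xs (t + 1)) := by
    intro Z hZ t
    refine ⟨![⋃ (i : Fin k) (_ : (i : ℕ) = t), Zs Z i, tailSet k (Zs Z) (t + 1)], ?_, ?_⟩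
    · rw [iUnion_fin_two', tailSet_succ]
    · intro i
      fin_cases i
      · -- first piece
        simp only [Matrix.cons_val_zero]
        by_cases ht : t < k
        · refine ⟨𝒞f Z ⟨t, ht⟩, ?_, ?_, ?_⟩
          · intro C hC
            have hCY : C ∈ 𝒴 := hsub Z hZ ⟨t, ht⟩ hC
            refine hcomp (t + 1) (Nat.succ_pos t) ⟨t, ht⟩ ?_
            have h0 : min ((t + 1) - (((⟨t, ht⟩ : Fin k) : ℕ)) - 1) m = 0 := by simp
            show C ∈ Ys (min ((t + 1) - (((⟨t, ht⟩ : Fin k) : ℕ) + 1)) m)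
            have h1 : min ((t + 1) - (((⟨t, ht⟩ : Fin k) : ℕ) + 1)) m = 0 := by
              simp
            rw [h1, hYs0]
            exact hCY
          · rw [iUnion_eq_single' k (Zs Z) t ht]
            exact hun Z hZ ⟨t, ht⟩
          · intro A hA B hB hne
            exact rdisjoint_mono' (hRmono.monotone ht.le)
              (hdis Z hZ ⟨t, ht⟩ A hA B hB hne)
        · refine ⟨∅, by simp, ?_, by simp⟩
          rw [iUnion_eq_empty'' k (Zs Z) t (by omega)]
          simp
      · -- second piece: the tail
        simp only [Matrix.cons_val_one, Matrix.head_cons]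
        refine ⟨{tailSet k (Zs Z) (t + 1)}, ?_, by simp, ?_⟩
        · intro C hC
          rw [Set.mem_singleton_iff] at hC
          subst hC
          exact htails (t + 1) (Nat.succ_pos t) Z hZ
        · intro A hA B hB hne
          rw [Set.mem_singleton_iff] at hA hB
          exact absurd (hA.trans hB.symm) hne
  refine ⟨k + m + 1, Xs, hXs0, ?_, ?_⟩
  · intro t _ W hW
    rcases Nat.eq_zero_or_pos t with rfl | ht
    · rw [hXs0] at hW
      have := keyTail W hW 0
      rwa [tailSet_zero, ← hZeq W hW] at this
    · rw [hXspos t ht] at hW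
      rcases hW with ⟨Z, hZ, rfl⟩ | hW
      · exact keyTail Z hZ t
      · rw [Set.mem_iUnion] at hW
        obtain ⟨j, hWj⟩ := hW
        have hj := j.isLt
        by_cases hcase : (j : ℕ) + 1 ≤ t ∧ t - ((j : ℕ) + 1) < m
        · obtain ⟨h1, h2⟩ := hcase
          have hchain := hYchain (t - ((j : ℕ) + 1)) h2
          have hrt : R t ≤ R ((t - ((j : ℕ) + 1)) + k) := hRmono.monotone (by omega)
          have hnext : Ys ((t - ((j : ℕ) + 1)) + 1) ⊆ Xs (t + 1) := by
            have hc := hcomp (t + 1) (by omega) j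
            have he : min ((t + 1) - ((j : ℕ) + 1)) m = (t - ((j : ℕ) + 1)) + 1 := by
              omega
            rwa [he] at hc
          have hm : min (t - ((j : ℕ) + 1)) m = t - ((j : ℕ) + 1) := by omega
          rw [hm] at hWj
          exact decomposable_mono' hrt hnext hchain W hWj
        · have he : min ((t + 1) - ((j : ℕ) + 1)) m = min (t - ((j : ℕ) + 1)) m := by
            omega
          have hsub' : Ys (min (t - ((j : ℕ) + 1)) m) ⊆ Xs (t + 1) := by
            have hc := hcomp (t + 1) (by omega) j
            rwa [he] at hc
          exact decomposable_self' _ hsub' W hWj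
  · obtain ⟨C, hC⟩ := hYbd
    refine ⟨C, ?_⟩
    intro W hW x hx y hy
    rw [hXspos (k + m + 1) (by omega)] at hW
    rcases hW with ⟨Z, hZ, rfl⟩ | hW
    · rw [tailSet_of_le k (Zs Z) _ (by omega)] at hx
      exact absurd hx (Set.notMem_empty x)
    · rw [Set.mem_iUnion] at hW
      obtain ⟨j, hWj⟩ := hW
      have hj := j.isLt
      have he : min ((k + m + 1) - ((j : ℕ) + 1)) m = m := by omega
      rw [he] at hWj
      exact hC W hWj x hx y hy
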